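/- arXiv:1810.09142 — 3 statements merged into one kernel-verified Lean document; each statement's English description precedes it below -/
import Mathlib

section
/- In the Kripke model M_k (a chain of 2k looped states alternating ¬p/p attached to a root r_k satisfying p, with a looped ¬p state b also accessible from the root), the single-variable CTL formula A_m = χ_m ∧ EX AG ¬p is true at a state x of M_k if and only if k = m and x = r_k, where χ₀ = ∀□p and χ_{k+1} = p ∧ EX(¬p ∧ EX χ_k). -/
/-- CTL formulas: variables, falsehood, implication, AX, ∀U, ∃U. -/
inductive CTL : Type where
  | var : ℕ → CTL
  | bot : CTL
  | imp : CTL → CTL → CTL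
  | ax : CTL → CTL
  | au : CTL → CTL → CTL
  | eu : CTL → CTL → CTL

namespace CTL
def neg (φ : CTL) : CTL := imp φ bot
def top : CTL := imp bot bot
def conj (φ ψ : CTL) : CTL := neg (imp φ (neg ψ))
def iffc (φ ψ : CTL) : CTL := conj (imp φ ψ) (imp ψ φ)
def ex (φ : CTL) : CTL := neg (ax (neg φ))
def ef (φ : CTL) : CTL := eu top φ
def ag (φ : CTL) : CTL := neg (ef (neg φ))
end CTL

/-- Serial Kripke models. -/
structure Kripke (S : Type) where
  rel : S → S → Prop
  serial : ∀ s, ∃ t, rel s t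
  val : ℕ → S → Prop

def isPath {S : Type} (M : Kripke S) (π : ℕ → S) : Prop :=
  ∀ i, M.rel (π i) (π (i + 1))

/-- CTL satisfaction over serial Kripke models. -/
def sat {S : Type} (M : Kripke S) : CTL → S → Prop
  | .var n, s => M.val n s
  | .bot, _ => False
  | .imp a b, s => sat M a s → sat M b s
  | .ax a, s => ∀ t, M.rel s t → sat M a t
  | .au a b, s => ∀ π, isPath M π → π 0 = s →
      ∃ i, sat M b (π i) ∧ ∀ j, j < i → sat M a (π j)
  | .eu a b, s => ∃ π, isPath M π ∧ π 0 = s ∧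
      ∃ i, sat M b (π i) ∧ ∀ j, j < i → sat M a (π j)

def satisfiable (φ : CTL) : Prop := ∃ (S : Type) (M : Kripke S) (s : S), sat M φ s
def valid (φ : CTL) : Prop := ∀ (S : Type) (M : Kripke S) (s : S), sat M φ s

/-- Variable q occurs in a formula. -/
def occurs (q : ℕ) : CTL → Prop
  | .var n => n = q
  | .bot => False
  | .imp a b => occurs q a ∨ occurs q b
  | .ax a => occurs q a
  | .au a b => occurs q a ∨ occurs q b
  | .eu a b => occurs q a ∨ occurs q b

/-- Uniform substitution of ψ for variable p. -/
def subst (p : ℕ) (ψ : CTL) : CTL → CTL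
  | .var n => if n = p then ψ else .var n
  | .bot => .bot
  | .imp a b => .imp (subst p ψ a) (subst p ψ b)
  | .ax a => .ax (subst p ψ a)
  | .au a b => .au (subst p ψ a) (subst p ψ b)
  | .eu a b => .eu (subst p ψ a) (subst p ψ b)

/-- The relativizing translation ·' with guard variable q. -/
def relTr (q : ℕ) : CTL → CTL
  | .var n => .var n
  | .bot => .bot
  | .imp a b => .imp (relTr q a) (relTr q b)
  | .ax a => .ax (.imp (.var q) (relTr q a))
  | .au a b => .au (relTr q a) (CTL.conj (.var q) (relTr q b))
  | .eu a b => .eu (relTr q a) (CTL.conj (.var q) (relTr q b))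

/-- Θ = q ∧ AG(EX q ↔ q). -/
def Theta (q : ℕ) : CTL :=
  CTL.conj (.var q) (CTL.ag (CTL.iffc (CTL.ex (.var q)) (.var q)))

/-- Transition relation of the chain model M_m: state 0 = root r_m, state 1 = b^m,
state i+1 = a_i for 1 ≤ i ≤ 2m; self-loops everywhere. -/
def chainRel (m : ℕ) (s t : Fin (2 * m + 2)) : Prop :=
  (s.val = 0 ∧ (t.val = 1 ∨ t.val = 2)) ∨
  (2 ≤ s.val ∧ s.val ≤ 2 * m ∧ t.val = s.val + 1) ∨
  t = s

/-- p is true exactly at the root and the even-indexed chain states a_{2j}. -/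
def chainVal (m : ℕ) (s : Fin (2 * m + 2)) : Prop :=
  s.val = 0 ∨ (3 ≤ s.val ∧ s.val % 2 = 1)

def chainModel (m : ℕ) : Kripke (Fin (2 * m + 2)) where
  rel := chainRel m
  serial := fun s => ⟨s, Or.inr (Or.inr rfl)⟩
  val := fun n s => n = 0 ∧ chainVal m s

def chainRoot (m : ℕ) : Fin (2 * m + 2) := ⟨0, by omega⟩

/-- χ₀ = ∀□p, χ_{k+1} = p ∧ EX(¬p ∧ EX χ_k); the single variable p is var 0. -/
def chi : ℕ → CTL
  | 0 => CTL.ag (.var 0)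
  | k + 1 => CTL.conj (.var 0) (CTL.ex (CTL.conj (CTL.neg (.var 0)) (CTL.ex (chi k))))

/-- A_m = χ_m ∧ EX AG ¬p. -/
def Aform (m : ℕ) : CTL := CTL.conj (chi m) (CTL.ex (CTL.ag (CTL.neg (.var 0))))

/-- B_m = EX A_m. -/
def Bform (m : ℕ) : CTL := CTL.ex (Aform m)

/-- The substitution σ : pᵢ ↦ Bᵢ for 1 ≤ i ≤ n+1. -/
def sigmaSub (n : ℕ) : CTL → CTL
  | .var i => if 1 ≤ i ∧ i ≤ n + 1 then Bform i else .var i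
  | .bot => .bot
  | .imp a b => .imp (sigmaSub n a) (sigmaSub n b)
  | .ax a => .ax (sigmaSub n a)
  | .au a b => .au (sigmaSub n a) (sigmaSub n b)
  | .eu a b => .eu (sigmaSub n a) (sigmaSub n b)

/-!
In `M_k` the root reaches every state, a chain state reaches exactly the chain states above it,
and `b` reaches only itself. Hence `AG p` holds only at the top `a_{2k}`, `EX AG ¬p` only at the
root and at `b`, and by induction `χ_j` holds exactly at the chain state `2j` steps below the
top when `j < k`, and at the root when `j = k`. Both conjuncts of `A_m` thus hold only at the root,
and only for `m = k`.
-/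

open Relation

namespace Kripke

variable {S : Type} (M : Kripke S)

theorem exists_isPath_start (s : S) : ∃ π, isPath M π ∧ π 0 = s := by
  choose next hnext using M.serial
  refine ⟨fun n => next^[n] s, fun i => ?_, rfl⟩
  simpa only [Function.iterate_succ_apply'] using hnext _

theorem exists_isPath_cons {π : ℕ → S} (hπ : isPath M π) {s : S} (hs : M.rel s (π 0)) :
    ∃ π', isPath M π' ∧ π' 0 = s ∧ ∀ i, π' (i + 1) = π i :=
  ⟨fun n => Nat.casesOn n s π, fun i => by cases i; exacts [hs, hπ _], rfl, fun _ => rfl⟩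

theorem reflTransGen_of_isPath {π : ℕ → S} (hπ : isPath M π) (i : ℕ) :
    ReflTransGen M.rel (π 0) (π i) := by
  induction i with
  | zero => exact .refl
  | succ i ih => exact ih.tail (hπ i)

end Kripke

section Semantics

variable {S : Type} (M : Kripke S) (a b : CTL) (s : S)

theorem sat_neg : sat M (CTL.neg a) s ↔ ¬sat M a s := Iff.rfl

theorem sat_conj : sat M (CTL.conj a b) s ↔ sat M a s ∧ sat M b s := by
  simp only [CTL.conj, sat_neg, sat]
  tauto

theorem sat_ex : sat M (CTL.ex a) s ↔ ∃ t, M.rel s t ∧ sat M a t := by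
  simp only [CTL.ex, sat_neg, sat]
  push Not
  rfl

theorem sat_ag_iff_forall_isPath :
    sat M (CTL.ag a) s ↔ ∀ π, isPath M π → π 0 = s → ∀ i, sat M a (π i) := by
  simp only [CTL.ag, CTL.ef, CTL.top, sat_neg, sat]
  push Not
  simp

theorem sat_ag_iff_forall_reflTransGen :
    sat M (CTL.ag a) s ↔ ∀ t, ReflTransGen M.rel s t → sat M a t := by
  rw [sat_ag_iff_forall_isPath]
  refine ⟨fun h t hst => ?_, fun h π hπ hπs i => h _ (hπs ▸ M.reflTransGen_of_isPath hπ i)⟩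
  have from_t : ∀ π, isPath M π → π 0 = t → ∀ i, sat M a (π i) := by
    induction hst with
    | refl => exact h
    | tail _ huv ih =>
      rintro π hπ rfl i
      obtain ⟨π', hπ', hπ's, hπ'succ⟩ := M.exists_isPath_cons hπ huv
      simpa only [hπ'succ] using ih π' hπ' hπ's (i + 1)
  -- seriality gives an infinite path from `t`, which `from_t` prefixes with the run from `s`
  obtain ⟨π, hπ, hπt⟩ := M.exists_isPath_start t
  simpa only [hπt] using from_t π hπ hπt 0

end Semantics

section ChainModel

variable {k : ℕ}

theorem chainModel_rel : (chainModel k).rel = chainRel k := rfl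

theorem eq_chainRoot_iff {x : Fin (2 * k + 2)} : x = chainRoot k ↔ x.val = 0 := Fin.ext_iff

theorem chainRel_iff_val {s t : Fin (2 * k + 2)} :
    chainRel k s t ↔ (s.val = 0 ∧ (t.val = 1 ∨ t.val = 2)) ∨
      (2 ≤ s.val ∧ s.val ≤ 2 * k ∧ t.val = s.val + 1) ∨ t.val = s.val := by
  rw [chainRel, Fin.ext_iff]

theorem chainRel_reflTransGen_of_two_le {s t : Fin (2 * k + 2)} (hs : 2 ≤ s.val)
    (hst : s.val ≤ t.val) : ReflTransGen (chainRel k) s t := by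
  obtain ⟨n, hn⟩ := t
  induction n with
  | zero => dsimp only at hst; omega
  | succ n ih =>
    obtain hsn | hsn : s.val = n + 1 ∨ s.val ≤ n := by dsimp only at hst; omega
    · obtain rfl : s = ⟨n + 1, hn⟩ := Fin.ext hsn
      exact .refl
    · exact (ih (by omega) hsn).tail (chainRel_iff_val.mpr (by dsimp only; omega))

theorem chainRel_reflTransGen_iff {s t : Fin (2 * k + 2)} :
    ReflTransGen (chainRel k) s t ↔ t.val = s.val ∨ s.val = 0 ∨ (2 ≤ s.val ∧ s.val ≤ t.val) := by
  constructor
  · intro h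
    induction h with
    | refl => exact .inl rfl
    | tail _ hbc ih => rw [chainRel_iff_val] at hbc; omega
  · rintro (hts | hs | ⟨hs, hst⟩)
    · rw [Fin.ext hts]
    · have := t.isLt
      obtain ht | ht | ht : t.val = 0 ∨ t.val = 1 ∨ 2 ≤ t.val := by omega
      · rw [Fin.ext (ht.trans hs.symm)]
      · exact .single (chainRel_iff_val.mpr (by omega))
      · exact .head (b := ⟨2, by omega⟩) (chainRel_iff_val.mpr (by dsimp only; omega))
          (chainRel_reflTransGen_of_two_le le_rfl ht)
    · exact chainRel_reflTransGen_of_two_le hs hst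

theorem sat_chainModel_ag {a : CTL} {x : Fin (2 * k + 2)} :
    sat (chainModel k) (CTL.ag a) x ↔ ∀ t : Fin (2 * k + 2),
      (t.val = x.val ∨ x.val = 0 ∨ (2 ≤ x.val ∧ x.val ≤ t.val)) → sat (chainModel k) a t := by
  simp only [sat_ag_iff_forall_reflTransGen, chainModel_rel, chainRel_reflTransGen_iff]

theorem sat_chainModel_var_zero {x : Fin (2 * k + 2)} :
    sat (chainModel k) (.var 0) x ↔ x.val = 0 ∨ (3 ≤ x.val ∧ x.val % 2 = 1) :=
  and_iff_right rfl

theorem sat_chainModel_ag_var_zero (hk : 1 ≤ k) {x : Fin (2 * k + 2)} :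
    sat (chainModel k) (CTL.ag (.var 0)) x ↔ x.val = 2 * k + 1 := by
  simp only [sat_chainModel_ag, sat_chainModel_var_zero]
  constructor
  · intro h
    by_contra hx
    -- unless `x` is the top, one of `x`, `b = 1`, `x + 1` is a reachable `¬p` state
    have at_x := h x (.inl rfl)
    have at_one := h ⟨1, by omega⟩
    have at_succ := h ⟨x.val + 1, by omega⟩
    dsimp only at at_one at_succ
    omega
  · intro hx t ht
    omega

theorem sat_chainModel_ag_neg_var_zero (hk : 1 ≤ k) {x : Fin (2 * k + 2)} :
    sat (chainModel k) (CTL.ag (CTL.neg (.var 0))) x ↔ x.val = 1 := by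
  simp only [sat_chainModel_ag, sat_neg, sat_chainModel_var_zero]
  constructor
  · intro h
    have at_x := h x (.inl rfl)
    have at_last := h ⟨2 * k + 1, by omega⟩
    dsimp only at at_last
    omega
  · intro hx t ht
    omega

theorem sat_chainModel_ex_ag_neg_var_zero (hk : 1 ≤ k) {x : Fin (2 * k + 2)} :
    sat (chainModel k) (CTL.ex (CTL.ag (CTL.neg (.var 0)))) x ↔ x.val ≤ 1 := by
  simp only [sat_ex, sat_chainModel_ag_neg_var_zero hk, chainModel_rel, chainRel_iff_val]
  constructor
  · rintro ⟨t, hxt, ht⟩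
    omega
  · intro hx
    exact ⟨⟨1, by omega⟩, by dsimp only; omega, rfl⟩

theorem sat_chainModel_chi (hk : 1 ≤ k) (j : ℕ) {x : Fin (2 * k + 2)} :
    sat (chainModel k) (chi j) x ↔ (j < k ∧ x.val + 2 * j = 2 * k + 1) ∨ (j = k ∧ x.val = 0) := by
  induction j generalizing x with
  | zero =>
    rw [chi, sat_chainModel_ag_var_zero hk]
    omega
  | succ j ih =>
    simp only [chi, sat_conj, sat_ex, sat_neg, sat_chainModel_var_zero, chainModel_rel,
      chainRel_iff_val, ih]
    constructor
    · rintro ⟨hx, t, hxt, ht, u, htu, hu⟩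
      omega
    · rintro (⟨hj, hx⟩ | ⟨rfl, hx⟩)
      · refine ⟨by omega, ⟨x.val + 1, by omega⟩, by dsimp only; omega, by dsimp only; omega,
          ⟨x.val + 2, by omega⟩, by dsimp only; omega, by dsimp only; omega⟩
      · refine ⟨by omega, ⟨2, by omega⟩, by dsimp only; omega, by dsimp only; omega,
          ⟨3, by omega⟩, by dsimp only; omega, by dsimp only; omega⟩

end ChainModel

theorem chain_model_Aform_general (m k : ℕ) (hk : 1 ≤ k) (x : Fin (2 * k + 2)) :
    sat (chainModel k) (Aform m) x ↔ k = m ∧ x = chainRoot k := by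
  rw [Aform, sat_conj, sat_chainModel_chi hk, sat_chainModel_ex_ag_neg_var_zero hk,
    eq_chainRoot_iff]
  omega

/-- In the chain model M_k, the formula A_m is true at x iff k = m and x is the root. -/
theorem chain_model_Aform (m k : ℕ) (hm : 1 ≤ m) (hk : 1 ≤ k) (x : Fin (2 * k + 2)) :
    sat (chainModel k) (Aform m) x ↔ k = m ∧ x = chainRoot k :=
  chain_model_Aform_general m k hk x
end

section
/- CTL embeds into ATL: replacing every ∀ by ⟨⟨∅⟩⟩ and every ∃ by ⟨⟨AG⟩⟩ (the grand coalition of all agents) preserves satisfiability; in particular a CTL formula φ is satisfiable in a serial Kripke model iff its translation is satisfiable in a concurrent game model. -/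
/-- Concurrent game models over a set of agents Ag. -/
structure CGM (Ag S : Type) where
  Act : Type
  act : Ag → S → Set Act
  act_nonempty : ∀ a s, (act a s).Nonempty
  tr : S → (Ag → Act) → S
  val : ℕ → S → Prop

/-- ATL formulas: ⟨⟨C⟩⟩X, ⟨⟨C⟩⟩□, ⟨⟨C⟩⟩U, with coalitions C ⊆ Ag. -/
inductive ATL (Ag : Type) : Type where
  | var : ℕ → ATL Ag
  | bot : ATL Ag
  | imp : ATL Ag → ATL Ag → ATL Ag
  | cnext : Set Ag → ATL Ag → ATL Ag
  | cbox : Set Ag → ATL Ag → ATL Ag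
  | cuntil : Set Ag → ATL Ag → ATL Ag → ATL Ag

def ATL.neg {Ag : Type} (φ : ATL Ag) : ATL Ag := .imp φ .bot
def ATL.conj {Ag : Type} (φ ψ : ATL Ag) : ATL Ag := ATL.neg (.imp φ (ATL.neg ψ))
def ATL.iffc {Ag : Type} (φ ψ : ATL Ag) : ATL Ag := ATL.conj (.imp φ ψ) (.imp ψ φ)

/-- An action profile available at s. -/
def profOK {Ag S : Type} (M : CGM Ag S) (s : S) (α : Ag → M.Act) : Prop :=
  ∀ a, α a ∈ M.act a s

/-- A (history-based) strategy: given the past history and the current state,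
choose an action for each agent. -/
def Strat {Ag S : Type} (M : CGM Ag S) : Type := Ag → List S → S → M.Act

def stratOK {Ag S : Type} (M : CGM Ag S) (str : Strat M) : Prop :=
  ∀ a h s, str a h s ∈ M.act a s

/-- The history of π strictly before step j. -/
def hist {S : Type} (π : ℕ → S) (j : ℕ) : List S := (List.range j).map π

/-- Π(s, str_C): paths starting at s resulting when the agents in C follow str. -/
def outPaths {Ag S : Type} (M : CGM Ag S) (C : Set Ag) (str : Strat M) (s : S) :
    Set (ℕ → S) :=
  { π | π 0 = s ∧ ∀ j, ∃ α, profOK M (π j) α ∧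
      (∀ a ∈ C, α a = str a (hist π j) (π j)) ∧ π (j + 1) = M.tr (π j) α }

/-- ATL satisfaction in concurrent game models. -/
def asat {Ag S : Type} (M : CGM Ag S) : ATL Ag → S → Prop
  | .var n, s => M.val n s
  | .bot, _ => False
  | .imp a b, s => asat M a s → asat M b s
  | .cnext C a, s => ∃ αC : Ag → M.Act, (∀ c ∈ C, αC c ∈ M.act c s) ∧
      ∀ α, profOK M s α → (∀ c ∈ C, α c = αC c) → asat M a (M.tr s α)
  | .cbox C a, s => ∃ str : Strat M, stratOK M str ∧
      ∀ π ∈ outPaths M C str s, ∀ i, asat M a (π i)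
  | .cuntil C a b, s => ∃ str : Strat M, stratOK M str ∧
      ∀ π ∈ outPaths M C str s, ∃ i, asat M b (π i) ∧ ∀ j, j < i → asat M a (π j)

/-- Satisfiability in a concurrent game model over the fixed agent set Ag. -/
def asatisfiable (Ag : Type) (φ : ATL Ag) : Prop :=
  ∃ (S : Type) (M : CGM Ag S) (s : S), asat M φ s

def aoccurs {Ag : Type} (q : ℕ) : ATL Ag → Prop
  | .var n => n = q
  | .bot => False
  | .imp a b => aoccurs q a ∨ aoccurs q b
  | .cnext _ a => aoccurs q a
  | .cbox _ a => aoccurs q a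
  | .cuntil _ a b => aoccurs q a ∨ aoccurs q b

/-- The translation of CTL into ATL: ∀ becomes ⟨⟨∅⟩⟩, ∃ becomes ⟨⟨AG⟩⟩. -/
def ctl2atl (Ag : Type) : CTL → ATL Ag
  | .var n => .var n
  | .bot => .bot
  | .imp a b => .imp (ctl2atl Ag a) (ctl2atl Ag b)
  | .ax a => .cnext ∅ (ctl2atl Ag a)
  | .au a b => .cuntil ∅ (ctl2atl Ag a) (ctl2atl Ag b)
  | .eu a b => .cuntil Set.univ (ctl2atl Ag a) (ctl2atl Ag b)

section Aux

variable {Ag S : Type}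

noncomputable def defProf (M : CGM Ag S) (s : S) : Ag → M.Act :=
  fun a => (M.act_nonempty a s).choose

lemma defProf_ok (M : CGM Ag S) (s : S) : profOK M s (defProf M s) :=
  fun a => (M.act_nonempty a s).choose_spec

noncomputable def defStr (M : CGM Ag S) : Strat M :=
  fun a _ s => (M.act_nonempty a s).choose

lemma defStr_ok (M : CGM Ag S) : stratOK M (defStr M) :=
  fun a _ s => (M.act_nonempty a s).choose_spec

/-- The induced step Kripke model of a CGM. -/
noncomputable def stepK (M : CGM Ag S) : Kripke S where
  rel s t := ∃ α, profOK M s α ∧ t = M.tr s α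
  serial s := ⟨M.tr s (defProf M s), defProf M s, defProf_ok M s, rfl⟩
  val := M.val

lemma hist_len (π : ℕ → S) (j : ℕ) : (hist π j).length = j := by simp [hist]

lemma hist_congr {π ρ : ℕ → S} {m : ℕ} (h : ∀ k, k < m → π k = ρ k) :
    hist π m = hist ρ m := by
  unfold hist
  apply List.map_congr_left
  intro x hx
  exact h x (List.mem_range.1 hx)

lemma outPaths_empty (M : CGM Ag S) (str : Strat M) (s : S) (π : ℕ → S) :
    π ∈ outPaths M ∅ str s ↔ π 0 = s ∧ isPath (stepK M) π := by
  constructor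
  · rintro ⟨h0, h⟩
    refine ⟨h0, fun j => ?_⟩
    obtain ⟨α, hα, -, heq⟩ := h j
    exact ⟨α, hα, heq⟩
  · rintro ⟨h0, h⟩
    refine ⟨h0, fun j => ?_⟩
    obtain ⟨α, hα, heq⟩ := h j
    exact ⟨α, hα, fun a ha => absurd ha (Set.notMem_empty a), heq⟩

/-- The canonical run of a strategy from a state. -/
noncomputable def run (M : CGM Ag S) (str : Strat M) (s : S) : ℕ → List S × S
  | 0 => ([], s)
  | n + 1 =>
    ((run M str s n).1 ++ [(run M str s n).2],
      M.tr (run M str s n).2 (fun a => str a (run M str s n).1 (run M str s n).2))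

noncomputable def runPath (M : CGM Ag S) (str : Strat M) (s : S) (n : ℕ) : S :=
  (run M str s n).2

lemma run_hist (M : CGM Ag S) (str : Strat M) (s : S) (n : ℕ) :
    (run M str s n).1 = hist (runPath M str s) n := by
  induction n with
  | zero => simp [run, hist]
  | succ n ih => simp [run, ih, hist, List.range_succ, runPath]

lemma runPath_zero (M : CGM Ag S) (str : Strat M) (s : S) : runPath M str s 0 = s := rfl

lemma runPath_succ (M : CGM Ag S) (str : Strat M) (s : S) (n : ℕ) :
    runPath M str s (n + 1) =
      M.tr (runPath M str s n)
        (fun a => str a (hist (runPath M str s) n) (runPath M str s n)) := by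
  conv_lhs => rw [runPath, run]
  rw [run_hist]
  rfl

lemma runPath_mem (M : CGM Ag S) (C : Set Ag) (str : Strat M) (s : S)
    (hstr : stratOK M str) : runPath M str s ∈ outPaths M C str s := by
  refine ⟨rfl, fun j => ?_⟩
  exact ⟨fun a => str a (hist (runPath M str s) j) (runPath M str s j),
    fun a => hstr a _ _, fun a _ => rfl, runPath_succ M str s j⟩

lemma runPath_isPath (M : CGM Ag S) (str : Strat M) (s : S)
    (hstr : stratOK M str) : isPath (stepK M) (runPath M str s) := by
  intro j
  exact ⟨fun a => str a (hist (runPath M str s) j) (runPath M str s j),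
    fun a => hstr a _ _, runPath_succ M str s j⟩

open Classical in
/-- A strategy making the grand coalition follow a given Kripke path. -/
noncomputable def mkStr (M : CGM Ag S) (π : ℕ → S) (hπ : isPath (stepK M) π) : Strat M :=
  fun a h s' =>
    if h = hist π h.length ∧ s' = π h.length then (hπ h.length).choose a
    else (M.act_nonempty a s').choose

lemma mkStr_ok (M : CGM Ag S) (π : ℕ → S) (hπ : isPath (stepK M) π) :
    stratOK M (mkStr M π hπ) := by
  intro a h s'
  unfold mkStr
  split
  · next hc =>
    rw [hc.2]
    exact (hπ h.length).choose_spec.1 a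
  · exact (M.act_nonempty a s').choose_spec

lemma mkStr_spec (M : CGM Ag S) (π : ℕ → S) (hπ : isPath (stepK M) π) (a : Ag) (m : ℕ) :
    mkStr M π hπ a (hist π m) (π m) = (hπ m).choose a := by
  unfold mkStr
  simp only [hist_len, and_self, if_true]
  have key : ∀ n, n = m → ∀ (p : (stepK M).rel (π n) (π (n + 1))),
      Exists.choose p a = Exists.choose (hπ m) a := by
    rintro n rfl p; rfl
  exact key _ (hist_len π m) _

/-- Every outcome of the grand coalition following `mkStr` is the given path. -/
lemma mkStr_outcome (M : CGM Ag S) (π : ℕ → S) (hπ : isPath (stepK M) π)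
    (ρ : ℕ → S) (hρ : ρ ∈ outPaths M Set.univ (mkStr M π hπ) (π 0)) :
    ∀ j, ρ j = π j := by
  intro j
  induction j using Nat.strong_induction_on with
  | _ j ih =>
    match j with
    | 0 => exact hρ.1
    | m + 1 =>
      have hh : hist ρ m = hist π m := hist_congr (fun k hk => ih k (by omega))
      have hm : ρ m = π m := ih m (by omega)
      obtain ⟨α, hα, hmem, heq⟩ := hρ.2 m
      have hαeq : α = (hπ m).choose := by
        funext a
        rw [hmem a (Set.mem_univ a), hh, hm, mkStr_spec]
      rw [heq, hm, hαeq]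
      exact ((hπ m).choose_spec.2).symm

/-- Master lemma: satisfaction of the translation in a CGM coincides with
CTL satisfaction in the induced step Kripke model. -/
lemma master (M : CGM Ag S) : ∀ (φ : CTL) (s : S),
    asat M (ctl2atl Ag φ) s ↔ sat (stepK M) φ s := by
  intro φ
  induction φ with
  | var n => intro s; exact Iff.rfl
  | bot => intro s; exact Iff.rfl
  | imp a b iha ihb => intro s; exact imp_congr (iha s) (ihb s)
  | ax a ih =>
    intro s
    constructor
    · rintro ⟨αC, -, h⟩ t ⟨α, hα, rfl⟩
      exact (ih _).1 (h α hα (fun c hc => absurd hc (Set.notMem_empty c)))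
    · intro h
      exact ⟨defProf M s, fun c hc => absurd hc (Set.notMem_empty c),
        fun α hα _ => (ih _).2 (h _ ⟨α, hα, rfl⟩)⟩
  | au a b iha ihb =>
    intro s
    constructor
    · rintro ⟨str, hstr, h⟩ π hπ h0
      obtain ⟨i, hb, ha⟩ := h π ((outPaths_empty M str s π).2 ⟨h0, hπ⟩)
      exact ⟨i, (ihb _).1 hb, fun j hj => (iha _).1 (ha j hj)⟩
    · intro h
      refine ⟨defStr M, defStr_ok M, fun π hπ => ?_⟩
      obtain ⟨h0, hp⟩ := (outPaths_empty M _ s π).1 hπ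
      obtain ⟨i, hb, ha⟩ := h π hp h0
      exact ⟨i, (ihb _).2 hb, fun j hj => (iha _).2 (ha j hj)⟩
  | eu a b iha ihb =>
    intro s
    constructor
    · rintro ⟨str, hstr, h⟩
      obtain ⟨i, hb, ha⟩ := h _ (runPath_mem M Set.univ str s hstr)
      exact ⟨runPath M str s, runPath_isPath M str s hstr, rfl, i,
        (ihb _).1 hb, fun j hj => (iha _).1 (ha j hj)⟩
    · rintro ⟨π, hπ, h0, i, hb, ha⟩
      subst h0
      refine ⟨mkStr M π hπ, mkStr_ok M π hπ, fun ρ hρ => ?_⟩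
      refine ⟨i, ?_, fun j hj => ?_⟩
      · rw [mkStr_outcome M π hπ ρ hρ i]
        exact (ihb _).2 hb
      · rw [mkStr_outcome M π hπ ρ hρ j]
        exact (iha _).2 (ha j hj)

/-- Satisfaction in Kripke models only depends on the relation and valuation. -/
lemma sat_ext {K₁ K₂ : Kripke S} (hrel : K₁.rel = K₂.rel) (hval : K₁.val = K₂.val) :
    ∀ φ s, sat K₁ φ s ↔ sat K₂ φ s := by
  intro φ
  induction φ with
  | var n => intro s; rw [sat, sat, hval]
  | bot => intro s; exact Iff.rfl
  | imp a b iha ihb => intro s; exact imp_congr (iha s) (ihb s)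
  | ax a ih => intro s; simp only [sat, hrel, ih]
  | au a b iha ihb => intro s; simp only [sat, isPath, hrel, iha, ihb]
  | eu a b iha ihb => intro s; simp only [sat, isPath, hrel, iha, ihb]

/-- The CGM induced by a Kripke model: every agent picks a successor, and the
transition follows a fixed agent's choice. -/
noncomputable def k2c (Ag : Type) [Nonempty Ag] (K : Kripke S) : CGM Ag S where
  Act := S
  act _ s := {t | K.rel s t}
  act_nonempty _ s := K.serial s
  tr _ α := α (Classical.arbitrary Ag)
  val := K.val

lemma k2c_rel (Ag : Type) [Nonempty Ag] (K : Kripke S) :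
    (stepK (k2c Ag K)).rel = K.rel := by
  funext s t
  apply propext
  constructor
  · rintro ⟨α, hα, rfl⟩
    exact hα (Classical.arbitrary Ag)
  · intro h
    exact ⟨fun _ => t, fun a => h, rfl⟩

end Aux

/-- CTL embeds into ATL: for any finite nonempty agent set, a CTL formula is
satisfiable in a serial Kripke model iff its translation is satisfiable in a
concurrent game model. -/
theorem ctl_embeds_into_atl (Ag : Type) [Fintype Ag] [Nonempty Ag] (φ : CTL) :
    satisfiable φ ↔ asatisfiable Ag (ctl2atl Ag φ) := by
  constructor
  · rintro ⟨S, K, s, hs⟩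
    refine ⟨S, k2c Ag K, s, (master (k2c Ag K) φ s).2 ?_⟩
    exact (sat_ext (k2c_rel Ag K) rfl φ s).2 hs
  · rintro ⟨S, M, s, hs⟩
    exact ⟨S, stepK M, s, (master M φ s).1 hs⟩
end

section
/- If a CTL formula φ is satisfied at state s₀ of a serial model M in which the guard Θ = p_{n+1} ∧ AG(EX p_{n+1} ↔ p_{n+1}) holds at s₀, then the generated submodel M' consisting of s₀ and all states reachable via successors satisfying p_{n+1} is itself serial, and p_{n+1} holds at every state of M'. -/
/-- The states of the smallest submodel of M containing s₀ and closed under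
successors satisfying variable q. -/
inductive Gen {S : Type} (M : Kripke S) (q : ℕ) (s₀ : S) : S → Prop where
  | base : Gen M q s₀ s₀
  | step : ∀ x y, Gen M q s₀ x → M.rel x y → M.val q y → Gen M q s₀ y

noncomputable def pathFrom {S : Type} (M : Kripke S) (s : S) : ℕ → S
  | 0 => s
  | k + 1 => Classical.choose (M.serial (pathFrom M s k))

lemma pathFrom_isPath {S : Type} (M : Kripke S) (s : S) : isPath M (pathFrom M s) :=
  fun i => Classical.choose_spec (M.serial (pathFrom M s i))

lemma gen_path {S : Type} {M : Kripke S} {q : ℕ} {s₀ x : S} (h : Gen M q s₀ x) :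
    ∃ π k, isPath M π ∧ π 0 = s₀ ∧ π k = x := by
  induction h with
  | base => exact ⟨pathFrom M s₀, 0, pathFrom_isPath M s₀, rfl, rfl⟩
  | step a b _ hab _ ih =>
    obtain ⟨π, k, hπ, h0, hk⟩ := ih
    refine ⟨fun i => if i ≤ k then π i else pathFrom M b (i - (k + 1)), k + 1, ?_, ?_, ?_⟩
    · intro i
      rcases lt_trichotomy i k with h | h | h
      · simp only [if_pos (Nat.le_of_lt h), if_pos (Nat.succ_le_of_lt h)]
        exact hπ i
      · subst h
        simp only [if_pos (le_refl i), if_neg (by omega : ¬ i + 1 ≤ i),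
          Nat.add_sub_cancel, hk]
        simpa [pathFrom] using hab
      · simp only [if_neg (by omega : ¬ i ≤ k), if_neg (by omega : ¬ i + 1 ≤ k),
          show i + 1 - (k + 1) = (i - (k + 1)) + 1 from by omega]
        exact pathFrom_isPath M b _
    · simpa using h0
    · simp only [if_neg (by omega : ¬ k + 1 ≤ k), Nat.add_sub_cancel]
      simp [pathFrom]

/-- If φ holds at s₀ in a serial model M in which the guard
Θ = p_{n+1} ∧ AG(EX p_{n+1} ↔ p_{n+1}) holds at s₀, then the generated submodel
(s₀ plus states reachable via successors satisfying p_{n+1}) is serial, and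
p_{n+1} holds at each of its states. -/
theorem generated_submodel_serial {S : Type} (M : Kripke S) (n : ℕ) (φ : CTL) (s₀ : S)
    (hφ : sat M φ s₀) (hΘ : sat M (Theta (n + 1)) s₀) :
    (∀ x, Gen M (n + 1) s₀ x → M.val (n + 1) x) ∧
    (∀ x, Gen M (n + 1) s₀ x → ∃ y, Gen M (n + 1) s₀ y ∧ M.rel x y) := by
  simp only [Theta, CTL.conj, CTL.neg, CTL.ag, CTL.ef, CTL.top, CTL.iffc, CTL.ex, sat] at hΘ
  have hq0 : M.val (n + 1) s₀ := by
    by_contra hc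
    exact hΘ (fun hq _ => hc hq)
  have hQ : ∀ x, Gen M (n + 1) s₀ x → M.val (n + 1) x := by
    intro x hx
    induction hx with
    | base => exact hq0
    | step a b _ _ hq => exact hq
  refine ⟨hQ, ?_⟩
  intro x hx
  obtain ⟨π, k, hπ, h0, hk⟩ := gen_path hx
  by_contra hc
  push_neg at hc
  refine hΘ (fun _ g => g ⟨π, hπ, h0, k, ?_, fun j _ f => f⟩)
  rw [hk]
  intro hsψ
  exact hsψ (fun _ h2 => h2 (hQ x hx) (fun t hr hv => hc t (Gen.step x t hx hr hv) hr))
end
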